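/- For every δ > 0 there exists a reversible nearest-neighbour periodic environment on Z^2 with all one-step probabilities strictly positive and average negative gradient g ≠ 0, such that the angle between g and the drift ν, namely arccos( ⟨g, ν⟩ / (|g| |ν|) ), is greater than π/2 − δ, while still ⟨g, ν⟩ > 0. Thus the conclusion ⟨g, ν⟩ > 0 of the main theorem cannot be improved to any fixed angle bound below π/2. -/

import Mathlib

noncomputable section

/-- `e` is one of the four unit vectors of `ℤ²`. -/
def IsUnitVec (e : Fin 2 → ℤ) : Prop :=
  ∃ i : Fin 2, e = Pi.single i 1 ∨ e = -Pi.single i 1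

/-- The family of jump distributions is nearest neighbour. -/
def IsNearestNeighbour (p : (Fin 2 → ℤ) → (Fin 2 → ℤ) → ℝ) : Prop :=
  ∀ x y, p x y ≠ 0 → IsUnitVec y

/-- The average negative gradient of the potential for periods `M₁, M₂`. -/
def avgNegGrad (M1 M2 : ℕ) (p : (Fin 2 → ℤ) → (Fin 2 → ℤ) → ℝ) : Fin 2 → ℝ :=
  fun i => ((![M1, M2] i : ℕ) : ℝ)⁻¹ * ∑ j ∈ Finset.range (![M1, M2] i),
    Real.log (p (Pi.single i (j : ℤ)) (Pi.single i 1) /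
      p (Pi.single i ((j : ℤ) + 1)) (-Pi.single i 1))

/-- A fundamental domain `{0, …, M₁-1} × {0, …, M₂-1}` for the torus
`ℤ²/(M₁ℤ × M₂ℤ)`, as a finite set of lattice points. -/
def fundDom (M1 M2 : ℕ) : Finset (Fin 2 → ℤ) :=
  (Finset.range M1 ×ˢ Finset.range M2).image fun q => ![(q.1 : ℤ), (q.2 : ℤ)]

/-!
A homogeneous environment (periods `M₁ = M₂ = 1`) that steps to `±eᵢ` with probabilities
`fwd i`, `bwd i` is reversible with a linear potential, the uniform measure is stationary, and
`gᵢ = log (fwd i / bwd i)`, `νᵢ = fwd i - bwd i`, so each coordinate contributes a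
nonnegative term to `⟨g, ν⟩`. Taking the `e₀`-steps rare (of order `η²`) but biased in
ratio `2`, and the `e₁`-steps frequent but weakly biased, makes `g` almost parallel to `e₀`
and `ν` almost parallel to `e₁`: the cosine of the angle is at most
`ν₀ / ν₁ + g₁ / g₀ = O(η)`.
-/

open Filter Topology

section

open Real

section HomogeneousEnvironment

lemma single_one_inj {i j : Fin 2} :
    (Pi.single i 1 : Fin 2 → ℤ) = Pi.single j 1 ↔ i = j := by
  refine ⟨fun h => ?_, fun h => h ▸ rfl⟩
  by_contra hij
  simpa [Pi.single_apply, hij] using congrFun h i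

lemma neg_single_one_ne_single_one (i j : Fin 2) :
    -(Pi.single i 1 : Fin 2 → ℤ) ≠ Pi.single j 1 := by
  intro h
  have := congrFun h i
  simp only [Pi.neg_apply, Pi.single_eq_same, Pi.single_apply] at this
  split_ifs at this

variable (fwd bwd : Fin 2 → ℝ)

def nnJump (y : Fin 2 → ℤ) : ℝ :=
  ∑ i, ((if y = Pi.single i 1 then fwd i else 0) + (if y = -Pi.single i 1 then bwd i else 0))

lemma nnJump_single (k : Fin 2) : nnJump fwd bwd (Pi.single k 1) = fwd k := by
  simp [nnJump, single_one_inj, (neg_single_one_ne_single_one _ k).symm]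

lemma nnJump_neg_single (k : Fin 2) : nnJump fwd bwd (-Pi.single k 1) = bwd k := by
  simp [nnJump, neg_single_one_ne_single_one, single_one_inj]

lemma nnJump_eq_zero {y : Fin 2 → ℤ} (hy : ¬IsUnitVec y) : nnJump fwd bwd y = 0 := by
  simp only [IsUnitVec, not_exists, not_or] at hy
  simp [nnJump, hy]

lemma isNearestNeighbour_nnJump : IsNearestNeighbour fun _ => nnJump fwd bwd :=
  fun _ _ hy => not_not.mp fun h => hy (nnJump_eq_zero fwd bwd h)

lemma nnJump_nonneg (hf : ∀ i, 0 ≤ fwd i) (hb : ∀ i, 0 ≤ bwd i) (y : Fin 2 → ℤ) :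
    0 ≤ nnJump fwd bwd y :=
  Finset.sum_nonneg fun i _ => by split_ifs <;> linarith [hf i, hb i]

lemma nnJump_pos (hf : ∀ i, 0 < fwd i) (hb : ∀ i, 0 < bwd i) {e : Fin 2 → ℤ}
    (he : IsUnitVec e) : 0 < nnJump fwd bwd e := by
  obtain ⟨i, rfl | rfl⟩ := he
  · simpa [nnJump_single] using hf i
  · simpa [nnJump_neg_single] using hb i

lemma hasSum_nnJump : HasSum (nnJump fwd bwd) (∑ i, (fwd i + bwd i)) :=
  hasSum_sum fun _ _ => (hasSum_ite_eq _ _).add (hasSum_ite_eq _ _)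

lemma hasSum_ite_mul_coord (v : Fin 2 → ℤ) (c : ℝ) (j : Fin 2) :
    HasSum (fun y : Fin 2 → ℤ => (if y = v then c else 0) * y j) (c * v j) := by
  convert hasSum_ite_eq v (c * v j) using 2 with y
  split_ifs with h <;> simp [h]

lemma hasSum_nnJump_mul_coord (j : Fin 2) :
    HasSum (fun y => nnJump fwd bwd y * y j) (fwd j - bwd j) := by
  have h := hasSum_sum (s := Finset.univ) fun i _ =>
    (hasSum_ite_mul_coord (Pi.single i 1) (fwd i) j).add
      (hasSum_ite_mul_coord (-Pi.single i 1) (bwd i) j)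
  convert h using 1
  · ext y
    simp only [nnJump, Finset.sum_mul, add_mul]
  · simp [Pi.single_apply, Finset.sum_add_distrib, sub_eq_add_neg, -Fin.sum_univ_two]

def logRatio : Fin 2 → ℝ := fun i => log (fwd i / bwd i)

def linearPotential (c : Fin 2 → ℝ) (x : Fin 2 → ℤ) : ℝ := -∑ i, c i * x i

lemma linearPotential_sub_add (c : Fin 2 → ℝ) (x e : Fin 2 → ℤ) :
    linearPotential c x - linearPotential c (x + e) = ∑ i, c i * e i := by
  simp only [linearPotential, Pi.add_apply, Int.cast_add, mul_add, Finset.sum_add_distrib]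
  ring

lemma linearPotential_logRatio_sub_add {e : Fin 2 → ℤ} (he : IsUnitVec e) (x : Fin 2 → ℤ) :
    linearPotential (logRatio fwd bwd) x - linearPotential (logRatio fwd bwd) (x + e) =
      log (nnJump fwd bwd e / nnJump fwd bwd (-e)) := by
  rw [linearPotential_sub_add]
  obtain ⟨i, rfl | rfl⟩ := he
  · simp [nnJump_single, nnJump_neg_single, logRatio, Pi.single_apply]
  · rw [neg_neg, nnJump_single, nnJump_neg_single, ← inv_div, log_inv]
    simp [logRatio, Pi.single_apply]

lemma avgNegGrad_one_one : avgNegGrad 1 1 (fun _ => nnJump fwd bwd) = logRatio fwd bwd := by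
  ext i
  fin_cases i <;> simp [avgNegGrad, logRatio, nnJump_single, nnJump_neg_single]

end HomogeneousEnvironment

lemma fundDom_one_one : fundDom 1 1 = {0} := by
  ext x
  simp [fundDom, funext_iff, Fin.forall_fin_two, eq_comm]

lemma sum_fundDom_one_one_tsum_indicator (p : (Fin 2 → ℤ) → (Fin 2 → ℤ) → ℝ)
    (hp : HasSum (p 0) 1) (y : Fin 2 → ℤ) :
    ∑ x ∈ fundDom 1 1, (fun _ => (1 : ℝ)) x * ∑' z : Fin 2 → ℤ,
      Set.indicator {z : Fin 2 → ℤ | ((1 : ℕ) : ℤ) ∣ (x 0 + z 0 - y 0) ∧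
        ((1 : ℕ) : ℤ) ∣ (x 1 + z 1 - y 1)} (p x) z = 1 := by
  simp [fundDom_one_one, hp.tsum_eq]

def cosAngle (g ν : Fin 2 → ℝ) : ℝ :=
  (g 0 * ν 0 + g 1 * ν 1) / (√(g 0 ^ 2 + g 1 ^ 2) * √(ν 0 ^ 2 + ν 1 ^ 2))

lemma cosAngle_pos_and_le {g ν : Fin 2 → ℝ} (hg : 0 < g 0) (hν : 0 < ν 1)
    (hdot : 0 < g 0 * ν 0 + g 1 * ν 1) :
    0 < cosAngle g ν ∧ cosAngle g ν ≤ ν 0 / ν 1 + g 1 / g 0 := by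
  have hden : g 0 * ν 1 ≤ √(g 0 ^ 2 + g 1 ^ 2) * √(ν 0 ^ 2 + ν 1 ^ 2) :=
    mul_le_mul (le_sqrt_of_sq_le (by nlinarith)) (le_sqrt_of_sq_le (by nlinarith)) hν.le
      (sqrt_nonneg _)
  refine ⟨div_pos hdot ((mul_pos hg hν).trans_le hden), ?_⟩
  calc cosAngle g ν ≤ (g 0 * ν 0 + g 1 * ν 1) / (g 0 * ν 1) :=
        div_le_div_of_nonneg_left hdot.le (mul_pos hg hν) hden
    _ = ν 0 / ν 1 + g 1 / g 0 := by field_simp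

def fwdWeights (η : ℝ) : Fin 2 → ℝ := ![2 * η ^ 2, 1 / 2 + η - 3 * η ^ 2]

def bwdWeights (η : ℝ) : Fin 2 → ℝ := ![η ^ 2, 1 / 2 - η]

lemma sum_fwdWeights_add_bwdWeights (η : ℝ) :
    ∑ i, (fwdWeights η i + bwdWeights η i) = 1 := by
  simp [fwdWeights, bwdWeights]
  ring

lemma fwdWeights_sub_bwdWeights (η : ℝ) :
    fwdWeights η - bwdWeights η = ![η ^ 2, 2 * η - 3 * η ^ 2] := by
  ext i
  fin_cases i <;> simp [fwdWeights, bwdWeights] <;> ring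

section SmallParameter

variable {η : ℝ}

lemma fwdWeights_pos (hη₀ : 0 < η) (hη : η ≤ 1 / 4) (i : Fin 2) : 0 < fwdWeights η i := by
  fin_cases i <;> simp [fwdWeights] <;> nlinarith

lemma bwdWeights_pos (hη₀ : 0 < η) (hη : η ≤ 1 / 4) (i : Fin 2) : 0 < bwdWeights η i := by
  fin_cases i <;> simp [bwdWeights] <;> nlinarith

lemma logRatio_weights_zero (hη₀ : 0 < η) :
    logRatio (fwdWeights η) (bwdWeights η) 0 = log 2 := by
  simp [logRatio, fwdWeights, bwdWeights, hη₀.ne']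

lemma logRatio_weights_one_pos_and_le (hη₀ : 0 < η) (hη : η ≤ 1 / 4) :
    0 < logRatio (fwdWeights η) (bwdWeights η) 1 ∧
      logRatio (fwdWeights η) (bwdWeights η) 1 ≤ 8 * η := by
  have hd : 0 < 1 / 2 - η := by linarith
  have hratio : 1 < (1 / 2 + η - 3 * η ^ 2) / (1 / 2 - η) := by
    rw [one_lt_div hd]; nlinarith
  simp only [logRatio, fwdWeights, bwdWeights, Matrix.cons_val_one, Matrix.cons_val_zero]
  refine ⟨log_pos hratio, (log_le_sub_one_of_pos (by linarith)).trans ?_⟩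
  rw [div_sub_one hd.ne', div_le_iff₀ hd]
  nlinarith

lemma inner_logRatio_weights_pos (hη₀ : 0 < η) (hη : η ≤ 1 / 4) :
    0 < logRatio (fwdWeights η) (bwdWeights η) 0 * (fwdWeights η - bwdWeights η) 0 +
      logRatio (fwdWeights η) (bwdWeights η) 1 * (fwdWeights η - bwdWeights η) 1 := by
  rw [logRatio_weights_zero hη₀, fwdWeights_sub_bwdWeights]
  have := (logRatio_weights_one_pos_and_le hη₀ hη).1
  have : 0 < 2 * η - 3 * η ^ 2 := by nlinarith
  simp only [Matrix.cons_val_zero, Matrix.cons_val_one]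
  positivity

lemma cosAngle_weights_pos_and_le (hη₀ : 0 < η) (hη : η ≤ 1 / 4) :
    0 < cosAngle (logRatio (fwdWeights η) (bwdWeights η)) (fwdWeights η - bwdWeights η) ∧
      cosAngle (logRatio (fwdWeights η) (bwdWeights η)) (fwdWeights η - bwdWeights η) ≤
        17 * η := by
  obtain ⟨hg₁, hg₁_le⟩ := logRatio_weights_one_pos_and_le hη₀ hη
  have hlog2 : 1 / 2 < log 2 := by linarith [log_two_gt_d9]
  have hν₁ : 0 < 2 * η - 3 * η ^ 2 := by nlinarith
  obtain ⟨hpos, hle⟩ := cosAngle_pos_and_le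
    (by rw [logRatio_weights_zero hη₀]; linarith)
    (by simpa only [fwdWeights_sub_bwdWeights, Matrix.cons_val_one, Matrix.cons_val_zero]
      using hν₁)
    (inner_logRatio_weights_pos hη₀ hη)
  refine ⟨hpos, hle.trans ?_⟩
  rw [logRatio_weights_zero hη₀, fwdWeights_sub_bwdWeights]
  simp only [Matrix.cons_val_zero, Matrix.cons_val_one]
  have h₀ : η ^ 2 / (2 * η - 3 * η ^ 2) ≤ η := by
    rw [div_le_iff₀ hν₁]; nlinarith
  have h₁ : logRatio (fwdWeights η) (bwdWeights η) 1 / log 2 ≤ 16 * η := by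
    rw [div_le_iff₀ (by linarith)]; nlinarith
  linarith

end SmallParameter

lemma eventually_pos_le_quarter : ∀ᶠ η in 𝓝[>] (0 : ℝ), 0 < η ∧ η ≤ 1 / 4 :=
  Ioc_mem_nhdsGT (by norm_num)

lemma tendsto_cosAngle_weights :
    Tendsto (fun η => cosAngle (logRatio (fwdWeights η) (bwdWeights η))
      (fwdWeights η - bwdWeights η)) (𝓝[>] 0) (𝓝 0) := by
  have h17 : Tendsto (fun η : ℝ => 17 * η) (𝓝[>] 0) (𝓝 0) := by
    simpa using ((continuous_const_mul (17 : ℝ)).tendsto 0).mono_left nhdsWithin_le_nhds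
  exact tendsto_of_tendsto_of_tendsto_of_le_of_le' tendsto_const_nhds h17
    (eventually_pos_le_quarter.mono fun η h => (cosAngle_weights_pos_and_le h.1 h.2).1.le)
    (eventually_pos_le_quarter.mono fun η h => (cosAngle_weights_pos_and_le h.1 h.2).2)

lemma tendsto_arccos_cosAngle_weights :
    Tendsto (fun η => arccos (cosAngle (logRatio (fwdWeights η) (bwdWeights η))
      (fwdWeights η - bwdWeights η))) (𝓝[>] 0) (𝓝 (π / 2)) := by
  rw [← arccos_zero]
  exact (continuous_arccos.tendsto 0).comp tendsto_cosAngle_weights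

end

/-- **The angle between `g` and `ν` can be arbitrarily close to `π/2`.** For every
`δ > 0` there is a reversible nearest-neighbour periodic environment on `ℤ²` with all
one-step probabilities positive and average negative gradient `g ≠ 0` such that the
angle `arccos (⟨g,ν⟩ / (|g||ν|))` between `g` and the drift `ν` exceeds `π/2 - δ`,
while still `⟨g, ν⟩ > 0`. -/
theorem angle_can_approach_right_angle (δ : ℝ) (hδ : 0 < δ) :
    ∃ M1 M2 : ℕ, 0 < M1 ∧ 0 < M2 ∧
    ∃ p : (Fin 2 → ℤ) → (Fin 2 → ℤ) → ℝ,
      (∀ x y, 0 ≤ p x y) ∧ (∀ x, HasSum (p x) 1) ∧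
      (∀ x y, p (x + Pi.single 0 (M1 : ℤ)) y = p x y) ∧
      (∀ x y, p (x + Pi.single 1 (M2 : ℤ)) y = p x y) ∧
      IsNearestNeighbour p ∧ (∀ x e, IsUnitVec e → 0 < p x e) ∧
      (∃ u : (Fin 2 → ℤ) → ℝ, u 0 = 0 ∧ ∀ x e, IsUnitVec e →
        u x - u (x + e) = Real.log (p x e / p (x + e) (-e))) ∧
      ∃ π : (Fin 2 → ℤ) → ℝ,
        (∀ x, 0 ≤ π x) ∧
        (∀ x, π (x + Pi.single 0 (M1 : ℤ)) = π x) ∧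
        (∀ x, π (x + Pi.single 1 (M2 : ℤ)) = π x) ∧
        (∑ x ∈ fundDom M1 M2, π x = 1) ∧
        (∀ y : Fin 2 → ℤ, ∑ x ∈ fundDom M1 M2, π x *
            ∑' z : Fin 2 → ℤ,
              Set.indicator {z : Fin 2 → ℤ |
                (M1 : ℤ) ∣ (x 0 + z 0 - y 0) ∧ (M2 : ℤ) ∣ (x 1 + z 1 - y 1)} (p x) z
          = π y) ∧
        ∃ g ν : Fin 2 → ℝ,
          g = avgNegGrad M1 M2 p ∧
          ν = (fun i => ∑ x ∈ fundDom M1 M2, π x *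
            ∑' y : Fin 2 → ℤ, p x y * (y i : ℝ)) ∧
          g ≠ 0 ∧
          0 < g 0 * ν 0 + g 1 * ν 1 ∧
          Real.pi / 2 - δ <
            Real.arccos ((g 0 * ν 0 + g 1 * ν 1) /
              (Real.sqrt (g 0 ^ 2 + g 1 ^ 2) * Real.sqrt (ν 0 ^ 2 + ν 1 ^ 2))) := by
  obtain ⟨η, ⟨hη₀, hη⟩, hη_angle⟩ := (eventually_pos_le_quarter.and
    (tendsto_arccos_cosAngle_weights.eventually
      (eventually_gt_nhds (by linarith : Real.pi / 2 - δ < Real.pi / 2)))).exists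
  set fwd := fwdWeights η
  set bwd := bwdWeights η
  have hf := fwdWeights_pos hη₀ hη
  have hb := bwdWeights_pos hη₀ hη
  have hsum : HasSum (nnJump fwd bwd) 1 :=
    sum_fwdWeights_add_bwdWeights η ▸ hasSum_nnJump fwd bwd
  refine ⟨1, 1, one_pos, one_pos, fun _ => nnJump fwd bwd,
    fun _ => nnJump_nonneg fwd bwd (fun i => (hf i).le) (fun i => (hb i).le), fun _ => hsum,
    fun _ _ => rfl, fun _ _ => rfl, isNearestNeighbour_nnJump fwd bwd,
    fun _ _ he => nnJump_pos fwd bwd hf hb he,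
    ⟨linearPotential (logRatio fwd bwd), by simp [linearPotential],
      fun x _ he => linearPotential_logRatio_sub_add fwd bwd he x⟩,
    fun _ => 1, fun _ => zero_le_one, fun _ => rfl, fun _ => rfl, by simp [fundDom_one_one],
    sum_fundDom_one_one_tsum_indicator _ hsum,
    logRatio fwd bwd, fwd - bwd,
    (avgNegGrad_one_one fwd bwd).symm, ?_, ?_, ?_, ?_⟩
  · ext i
    simp [fundDom_one_one, (hasSum_nnJump_mul_coord fwd bwd i).tsum_eq]
  · exact fun h => (Real.log_pos one_lt_two).ne'
      ((logRatio_weights_zero hη₀).symm.trans (congrFun h 0))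
  · exact inner_logRatio_weights_pos hη₀ hη
  · exact hη_angle
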